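/- Let β > 0, γ ≥ 0, μ ≥ 0, and let A(u,v) = μ·u(0)·v(0) + ∫₀^∞ u'v' dx + γ·∫₀^∞ uv dx. Define R_0 = l_0^{−1,β} and recursively R_k = l_k^{−1,β} − d_{k−1}·R_{k−1} with ρ_0 = μ + β/4 + γ/β, d_{k−1} = (β/4 − γ/β)/ρ_{k−1}, ρ_k = −d_{k−1}²·ρ_{k−1} + β/2 + 2γ/β. Then A(l_k^{−1,β}, R_m) = (β/4 − γ/β)·δ_{m,k−1} for all k > m ≥ 0. -/

import Mathlib

open Finset

/-- Generalized Laguerre polynomial `L_k^α(x)`, extended by `0` for negative index `k`. -/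
noncomputable def genLaguerre (α : ℝ) (k : ℤ) (x : ℝ) : ℝ :=
  if k < 0 then 0 else
    ∑ ν ∈ Finset.range (k.toNat + 1),
      (ascPochhammer ℝ (k.toNat - ν)).eval (α + ν + 1) /
        ((k.toNat - ν).factorial * ν.factorial) * (-x) ^ ν

/-- Generalized Laguerre function `l_k^{α,β}(x) = e^{-βx/2} L_k^α(βx)`. -/
noncomputable def genLaguerreFun (α β : ℝ) (k : ℤ) (x : ℝ) : ℝ :=
  Real.exp (-(β * x) / 2) * genLaguerre α k (β * x)

/-- The coercive bilinear form `A(u,v) = μ u(0) v(0) + (u',v') + γ (u,v)` on the half line. -/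
noncomputable def robinForm (γ μ : ℝ) (u v : ℝ → ℝ) : ℝ :=
  μ * u 0 * v 0 + (∫ x in Set.Ioi (0 : ℝ), deriv u x * deriv v x)
    + γ * ∫ x in Set.Ioi (0 : ℝ), u x * v x

/-- The normalization constants `ρ_k` of the Sobolev orthogonal Laguerre functions. -/
noncomputable def rhoR (β γ μ : ℝ) : ℕ → ℝ
  | 0 => μ + β / 4 + γ / β
  | k + 1 => -((β / 4 - γ / β) / rhoR β γ μ k) ^ 2 * rhoR β γ μ k + β / 2 + 2 * γ / β

/-- The Sobolev orthogonal Laguerre functions `R_k^β`,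
defined by `R_0 = l_0^{-1,β}` and `R_k = l_k^{-1,β} - d_{k-1} R_{k-1}`
with `d_{k-1} = (β/4 - γ/β)/ρ_{k-1}`. -/
noncomputable def Rfun (β γ μ : ℝ) : ℕ → ℝ → ℝ
  | 0 => genLaguerreFun (-1) β 0
  | k + 1 => fun x =>
      genLaguerreFun (-1) β (k + 1) x - ((β / 4 - γ / β) / rhoR β γ μ k) * Rfun β γ μ k x

/-! Since `L_k^{-1} = L_k^0 - L_{k-1}^0` and `(l_k^{-1,β})' = -(β/2) (l_k^{0,β} + l_{k-1}^{0,β})`,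
both integrals in `A(l_k^{-1,β}, l_j^{-1,β})` are sums of four integrals `∫ l_a^{0,β} l_b^{0,β}`,
which vanish unless `a = b` by orthogonality. For `j < k` only the pair `a = b = k - 1 = j`
survives, giving `(β/4 - γ/β) δ_{j,k-1}`, and the boundary term vanishes since
`l_k^{-1,β}(0) = 0`. As `R_m` is `l_m^{-1,β}` plus a combination of the `l_j^{-1,β}` with `j < m`,
linearity of `A` in its second argument gives the theorem.

The orthogonality of the `L_n^0` with respect to `e^{-t}` reduces, after expanding both
polynomials and integrating `e^{-t} t^n` to `n!`, to alternating binomial sums, which are iterated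
forward differences of `x ↦ (x choose n)`. -/

open Real Set MeasureTheory Nat Polynomial fwdDiff

/-- The coefficient `(n + α choose n - ν) / ν!` of `(-x) ^ ν` in `L_n^α(x)`. -/
noncomputable def laguerreCoeff (α : ℝ) (n ν : ℕ) : ℝ :=
  (ascPochhammer ℝ (n - ν)).eval (α + ν + 1) / ((n - ν)! * ν !)

theorem genLaguerre_natCast (α : ℝ) (n : ℕ) (x : ℝ) :
    genLaguerre α n x = ∑ ν ∈ range (n + 1), laguerreCoeff α n ν * (-x) ^ ν := by
  simp [genLaguerre, laguerreCoeff]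

theorem genLaguerre_of_neg (α : ℝ) {k : ℤ} (hk : k < 0) : genLaguerre α k = 0 := by
  ext x
  simp [genLaguerre, hk]

theorem laguerreCoeff_self (α : ℝ) (n : ℕ) : laguerreCoeff α n n = (n ! : ℝ)⁻¹ := by
  simp [laguerreCoeff]

theorem laguerreCoeff_zero_left {n ν : ℕ} (hν : ν ≤ n) :
    laguerreCoeff 0 n ν = n.choose ν / ν ! := by
  have hfac : (ν ! : ℝ) * (ascPochhammer ℝ (n - ν)).eval ((ν : ℝ) + 1) = n ! := by
    rw [factorial_mul_ascPochhammer, Nat.add_sub_cancel' hν]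
  rw [laguerreCoeff, zero_add, Nat.cast_choose ℝ hν, ← hfac]
  field_simp

theorem succ_mul_laguerreCoeff_succ (α : ℝ) (n ν : ℕ) :
    (ν + 1) * laguerreCoeff α (n + 1) (ν + 1) = laguerreCoeff (α + 1) n ν := by
  rw [laguerreCoeff, laguerreCoeff, Nat.add_sub_add_right, factorial_succ]
  push_cast
  rw [show α + (ν + 1) + 1 = α + 1 + ν + 1 by ring]
  field_simp

/-- Pascal's rule `(a)ₘ₊₁ = (a + 1)ₘ₊₁ - (m + 1) (a + 1)ₘ` for rising factorials, `a = α + ν + 1`. -/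
theorem laguerreCoeff_succ_eq_sub {n ν : ℕ} (α : ℝ) (hν : ν ≤ n) :
    laguerreCoeff α (n + 1) ν = laguerreCoeff (α + 1) (n + 1) ν - laguerreCoeff (α + 1) n ν := by
  obtain ⟨m, rfl⟩ := Nat.exists_eq_add_of_le hν
  have hm : ν + m + 1 - ν = m + 1 := by omega
  rw [laguerreCoeff, laguerreCoeff, laguerreCoeff, hm, Nat.add_sub_cancel_left,
    ascPochhammer_succ_eval m (α + 1 + ν + 1), ascPochhammer_succ_left, factorial_succ]
  simp only [eval_mul, eval_X, eval_comp, eval_add, eval_one]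
  push_cast
  rw [show α + ν + 1 + 1 = α + 1 + ν + 1 by ring]
  field_simp
  ring

theorem hasDerivAt_genLaguerre (α : ℝ) (k : ℤ) (x : ℝ) :
    HasDerivAt (genLaguerre α k) (-genLaguerre (α + 1) (k - 1) x) x := by
  rcases lt_trichotomy k 0 with hk | rfl | hk
  · rw [genLaguerre_of_neg α hk, genLaguerre_of_neg _ (by omega)]
    simp
  · have hconst : genLaguerre α 0 = fun _ => 1 := by
      ext y
      simp [genLaguerre]
    rw [hconst, genLaguerre_of_neg _ (by omega)]
    simpa using hasDerivAt_const x (1 : ℝ)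
  · obtain ⟨n, rfl⟩ : ∃ n : ℕ, k = (n + 1 : ℕ) := ⟨k.toNat - 1, by omega⟩
    have hfun : genLaguerre α ((n + 1 : ℕ) : ℤ) =
        fun y => ∑ ν ∈ range (n + 1 + 1), laguerreCoeff α (n + 1) ν * (-y) ^ ν :=
      funext (genLaguerre_natCast α (n + 1))
    rw [hfun, show ((n + 1 : ℕ) : ℤ) - 1 = n by push_cast; ring, genLaguerre_natCast]
    refine (HasDerivAt.fun_sum (u := range (n + 1 + 1)) (fun ν _ =>
      (((hasDerivAt_neg x).pow ν).const_mul (laguerreCoeff α (n + 1) ν)))).congr_deriv ?_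
    rw [sum_range_succ', ← sum_neg_distrib]
    simp only [CharP.cast_eq_zero, zero_mul, mul_zero, add_zero, add_tsub_cancel_right]
    refine sum_congr rfl fun ν _ => ?_
    rw [← succ_mul_laguerreCoeff_succ]
    push_cast
    ring

theorem genLaguerre_eq_sub (α : ℝ) (k : ℤ) (x : ℝ) :
    genLaguerre α k x = genLaguerre (α + 1) k x - genLaguerre (α + 1) (k - 1) x := by
  rcases lt_trichotomy k 0 with hk | rfl | hk
  · simp [genLaguerre_of_neg _ hk, genLaguerre_of_neg _ (show k - 1 < 0 by omega)]
  · simp [genLaguerre]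
  · obtain ⟨n, rfl⟩ : ∃ n : ℕ, k = (n + 1 : ℕ) := ⟨k.toNat - 1, by omega⟩
    rw [show ((n + 1 : ℕ) : ℤ) - 1 = n by push_cast; ring, genLaguerre_natCast,
      genLaguerre_natCast, genLaguerre_natCast, sum_range_succ, sum_range_succ _ (n + 1),
      laguerreCoeff_self, laguerreCoeff_self, add_sub_right_comm, ← sum_sub_distrib]
    congr 1
    refine sum_congr rfl fun ν hν => ?_
    rw [laguerreCoeff_succ_eq_sub α (by simpa [Nat.lt_succ_iff] using hν)]
    ring

theorem genLaguerre_natCast_apply_zero (α : ℝ) (n : ℕ) :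
    genLaguerre α n 0 = laguerreCoeff α n 0 := by
  simp [genLaguerre_natCast, sum_range_succ']

theorem genLaguerreFun_eq_sub (α β : ℝ) (k : ℤ) (x : ℝ) :
    genLaguerreFun α β k x = genLaguerreFun (α + 1) β k x - genLaguerreFun (α + 1) β (k - 1) x := by
  simp only [genLaguerreFun, genLaguerre_eq_sub α k]
  ring

theorem hasDerivAt_genLaguerreFun (α β : ℝ) (k : ℤ) (x : ℝ) :
    HasDerivAt (genLaguerreFun α β k)
      (-(β / 2) * genLaguerreFun α β k x - β * genLaguerreFun (α + 1) β (k - 1) x) x := by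
  have hexp : HasDerivAt (fun y => exp (-(β * y) / 2)) (exp (-(β * x) / 2) * -(β / 2)) x := by
    have hlin : HasDerivAt (fun y : ℝ => -(β * y) / 2) (-(β / 2)) x := by
      simpa [neg_div] using ((hasDerivAt_id' x).const_mul β).neg.div_const 2
    exact hlin.exp
  have hpoly : HasDerivAt (fun y => genLaguerre α k (β * y))
      (-genLaguerre (α + 1) (k - 1) (β * x) * β) x := by
    simpa [Function.comp_def] using
      (hasDerivAt_genLaguerre α k (β * x)).comp x ((hasDerivAt_id' x).const_mul β)
  refine (hexp.mul hpoly).congr_deriv ?_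
  simp only [genLaguerreFun]
  ring

theorem genLaguerreFun_neg_one_eq_sub (β : ℝ) (k : ℤ) (x : ℝ) :
    genLaguerreFun (-1) β k x = genLaguerreFun 0 β k x - genLaguerreFun 0 β (k - 1) x := by
  rw [genLaguerreFun_eq_sub, neg_add_cancel]

theorem hasDerivAt_genLaguerreFun_neg_one (β : ℝ) (k : ℤ) (x : ℝ) :
    HasDerivAt (genLaguerreFun (-1) β k)
      (-(β / 2) * (genLaguerreFun 0 β k x + genLaguerreFun 0 β (k - 1) x)) x := by
  refine (hasDerivAt_genLaguerreFun (-1) β k x).congr_deriv ?_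
  rw [genLaguerreFun_neg_one_eq_sub, neg_add_cancel]
  ring

theorem genLaguerreFun_neg_one_apply_zero (β : ℝ) {k : ℤ} (hk : 0 < k) :
    genLaguerreFun (-1) β k 0 = 0 := by
  lift k to ℕ using hk.le
  simp [genLaguerreFun, genLaguerre_natCast_apply_zero, laguerreCoeff, Int.natCast_pos.mp hk |>.ne']

theorem alternating_sum_choose_mul_eq_fwdDiff (f : ℕ → ℤ) (n : ℕ) :
    ∑ ν ∈ range (n + 1), (-1) ^ ν * n.choose ν * f ν = (-1) ^ n * Δ_[1] ^[n] f 0 := by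
  rw [fwdDiff_iter_eq_sum_shift, mul_sum]
  refine sum_congr rfl fun ν hν => ?_
  obtain ⟨d, rfl⟩ := Nat.exists_eq_add_of_le (Nat.lt_succ_iff.mp (mem_range.mp hν))
  have hsq : ((-1 : ℤ) ^ d) * (-1) ^ d = 1 := by rw [← mul_pow]; simp
  simp only [Nat.add_sub_cancel_left, zero_add, smul_eq_mul, mul_one, pow_add]
  linear_combination (-(-1) ^ ν * ((ν + d).choose ν : ℤ) * f ν) * hsq

theorem fwdDiff_iter_choose_apply_self (b ν : ℕ) :
    Δ_[1] ^[b] (fun x ↦ x.choose ν : ℕ → ℤ) ν = ν.choose b := by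
  rcases le_or_gt b ν with hb | hb
  · obtain ⟨j, rfl⟩ := Nat.exists_eq_add_of_le hb
    rw [fwdDiff_iter_choose, choose_symm_add]
  · obtain ⟨j, rfl⟩ := Nat.exists_eq_add_of_lt hb
    have hν : Δ_[1] ^[ν] (fun x ↦ x.choose ν : ℕ → ℤ) = fun _ ↦ 1 := by
      simpa using fwdDiff_iter_choose 0 ν
    rw [show ν + j + 1 = (j + 1) + ν by ring, Function.iterate_add_apply, hν,
      choose_eq_zero_of_lt (by omega), Function.iterate_succ_apply, fwdDiff_const]
    simp [fwdDiff_iter_eq_sum_shift]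

theorem alternating_sum_choose_mul_choose_add (b ν : ℕ) :
    ∑ μ ∈ range (b + 1), (-1 : ℤ) ^ μ * b.choose μ * (μ + ν).choose ν = (-1) ^ b * ν.choose b := by
  have hshift := fwdDiff_iter_comp_add 1 (fun x ↦ (x.choose ν : ℤ)) ν b 0
  rw [alternating_sum_choose_mul_eq_fwdDiff (fun μ ↦ ((μ + ν).choose ν : ℤ)), hshift, zero_add,
    fwdDiff_iter_choose_apply_self]

theorem alternating_sum_choose_mul_choose (a b : ℕ) :
    ∑ ν ∈ range (a + 1), (-1 : ℤ) ^ ν * a.choose ν * ν.choose b = if a = b then (-1) ^ a else 0 := by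
  rw [alternating_sum_choose_mul_eq_fwdDiff (fun ν ↦ (ν.choose b : ℤ)), fwdDiff_iter_choose_zero]
  split_ifs <;> simp

theorem sum_sum_choose_mul_choose_mul_choose_add (a b : ℕ) :
    ∑ ν ∈ range (a + 1), ∑ μ ∈ range (b + 1),
      (-1 : ℤ) ^ ν * a.choose ν * ((-1) ^ μ * b.choose μ * (μ + ν).choose ν) =
        if a = b then 1 else 0 := by
  simp only [← mul_sum, alternating_sum_choose_mul_choose_add]
  calc _ = (-1) ^ b * ∑ ν ∈ range (a + 1), (-1 : ℤ) ^ ν * a.choose ν * ν.choose b := by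
        rw [mul_sum]
        exact sum_congr rfl fun ν _ => by ring
    _ = _ := by
        rw [alternating_sum_choose_mul_choose]
        split_ifs with h
        · simp [h, ← pow_add, ← two_mul, pow_mul]
        · simp

theorem integrableOn_exp_neg_mul_pow (n : ℕ) :
    IntegrableOn (fun t => exp (-t) * t ^ n) (Ioi 0) := by
  refine (GammaIntegral_convergent (s := n + 1) (by positivity)).congr_fun (fun t _ => ?_)
    measurableSet_Ioi
  simp [← rpow_natCast]

theorem integral_exp_neg_mul_pow (n : ℕ) : ∫ t in Ioi 0, exp (-t) * t ^ n = n ! := by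
  rw [← Gamma_nat_eq_factorial, Gamma_eq_integral (by positivity)]
  simp [← rpow_natCast]

theorem exp_neg_mul_sum_mul_sum (c d : ℕ → ℝ) (a b : ℕ) (t : ℝ) :
    exp (-t) * ((∑ ν ∈ range a, c ν * (-t) ^ ν) * ∑ μ ∈ range b, d μ * (-t) ^ μ) =
      ∑ ν ∈ range a, ∑ μ ∈ range b, c ν * d μ * (-1) ^ (ν + μ) * (exp (-t) * t ^ (ν + μ)) := by
  rw [sum_mul_sum, mul_sum]
  refine sum_congr rfl fun ν _ => ?_
  rw [mul_sum]
  refine sum_congr rfl fun μ _ => ?_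
  rw [neg_pow t, neg_pow t, pow_add, pow_add]
  ring

theorem integrableOn_exp_neg_mul_sum_mul_sum (c d : ℕ → ℝ) (a b : ℕ) :
    IntegrableOn (fun t => exp (-t) *
      ((∑ ν ∈ range a, c ν * (-t) ^ ν) * ∑ μ ∈ range b, d μ * (-t) ^ μ)) (Ioi 0) := by
  simp only [exp_neg_mul_sum_mul_sum]
  exact integrable_finsetSum _ fun ν _ => integrable_finsetSum _ fun μ _ =>
    (integrableOn_exp_neg_mul_pow (ν + μ)).const_mul _

theorem integral_exp_neg_mul_sum_mul_sum (c d : ℕ → ℝ) (a b : ℕ) :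
    ∫ t in Ioi 0, exp (-t) * ((∑ ν ∈ range a, c ν * (-t) ^ ν) * ∑ μ ∈ range b, d μ * (-t) ^ μ) =
      ∑ ν ∈ range a, ∑ μ ∈ range b, c ν * d μ * (-1) ^ (ν + μ) * (ν + μ)! := by
  simp only [exp_neg_mul_sum_mul_sum]
  rw [integral_finsetSum _ fun ν _ => integrable_finsetSum _ fun μ _ =>
    (integrableOn_exp_neg_mul_pow (ν + μ)).const_mul _]
  refine sum_congr rfl fun ν _ => ?_
  rw [integral_finsetSum _ fun μ _ => (integrableOn_exp_neg_mul_pow (ν + μ)).const_mul _]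
  simp only [integral_const_mul, integral_exp_neg_mul_pow]

theorem integrableOn_exp_neg_mul_genLaguerre_mul (α α' : ℝ) (a b : ℤ) :
    IntegrableOn (fun t => exp (-t) * (genLaguerre α a t * genLaguerre α' b t)) (Ioi 0) := by
  rcases lt_or_ge a 0 with ha | ha
  · simp [genLaguerre_of_neg α ha]
  rcases lt_or_ge b 0 with hb | hb
  · simp [genLaguerre_of_neg α' hb]
  lift a to ℕ using ha
  lift b to ℕ using hb
  simp only [genLaguerre_natCast]
  exact integrableOn_exp_neg_mul_sum_mul_sum _ _ _ _

theorem integral_exp_neg_mul_genLaguerre_zero_mul (a b : ℕ) :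
    ∫ t in Ioi 0, exp (-t) * (genLaguerre 0 a t * genLaguerre 0 b t) = if a = b then 1 else 0 := by
  have hcomb := congrArg (Int.cast : ℤ → ℝ) (sum_sum_choose_mul_choose_mul_choose_add a b)
  push_cast at hcomb
  simp only [genLaguerre_natCast, integral_exp_neg_mul_sum_mul_sum, ← hcomb]
  refine sum_congr rfl fun ν hν => sum_congr rfl fun μ hμ => ?_
  rw [laguerreCoeff_zero_left (Nat.lt_succ_iff.mp (mem_range.mp hν)),
    laguerreCoeff_zero_left (Nat.lt_succ_iff.mp (mem_range.mp hμ)), add_comm μ ν, cast_add_choose]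
  field_simp
  rw [pow_add]
  ring

theorem genLaguerreFun_mul_genLaguerreFun (α α' β : ℝ) (a b : ℤ) (x : ℝ) :
    genLaguerreFun α β a x * genLaguerreFun α' β b x =
      exp (-(β * x)) * (genLaguerre α a (β * x) * genLaguerre α' b (β * x)) := by
  have hexp : exp (-(β * x)) = exp (-(β * x) / 2) * exp (-(β * x) / 2) := by
    rw [← exp_add]
    ring_nf
  rw [genLaguerreFun, genLaguerreFun, hexp]
  ring

theorem integrableOn_genLaguerreFun_mul {β : ℝ} (hβ : 0 < β) (α α' : ℝ) (a b : ℤ) :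
    IntegrableOn (fun x => genLaguerreFun α β a x * genLaguerreFun α' β b x) (Ioi 0) := by
  simp only [genLaguerreFun_mul_genLaguerreFun]
  refine (integrableOn_Ioi_comp_mul_left_iff
    (fun t => exp (-t) * (genLaguerre α a t * genLaguerre α' b t)) 0 hβ).2 ?_
  simpa using integrableOn_exp_neg_mul_genLaguerre_mul α α' a b

theorem integral_genLaguerreFun_zero_mul {β : ℝ} (hβ : 0 < β) {a : ℤ} (ha : 0 ≤ a) (b : ℤ) :
    ∫ x in Ioi 0, genLaguerreFun 0 β a x * genLaguerreFun 0 β b x = if a = b then β⁻¹ else 0 := by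
  simp only [genLaguerreFun_mul_genLaguerreFun]
  rw [integral_comp_mul_left_Ioi (fun t => exp (-t) * (genLaguerre 0 a t * genLaguerre 0 b t)) 0 hβ,
    mul_zero, smul_eq_mul]
  lift a to ℕ using ha
  rcases lt_or_ge b 0 with hb | hb
  · simp [genLaguerre_of_neg 0 hb, (show (a : ℤ) ≠ b by omega)]
  lift b to ℕ using hb
  rw [integral_exp_neg_mul_genLaguerre_zero_mul]
  by_cases h : a = b <;> simp [h]

theorem integral_genLaguerreFun_add_mul_add {β : ℝ} (hβ : 0 < β) (α s t : ℝ) (a a' b b' : ℤ) :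
    IntegrableOn (fun x => (genLaguerreFun α β a x + s * genLaguerreFun α β a' x) *
      (genLaguerreFun α β b x + t * genLaguerreFun α β b' x)) (Ioi 0) ∧
    ∫ x in Ioi 0, (genLaguerreFun α β a x + s * genLaguerreFun α β a' x) *
      (genLaguerreFun α β b x + t * genLaguerreFun α β b' x) =
        (∫ x in Ioi 0, genLaguerreFun α β a x * genLaguerreFun α β b x) +
        t * (∫ x in Ioi 0, genLaguerreFun α β a x * genLaguerreFun α β b' x) +
        s * (∫ x in Ioi 0, genLaguerreFun α β a' x * genLaguerreFun α β b x) +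
        s * t * ∫ x in Ioi 0, genLaguerreFun α β a' x * genLaguerreFun α β b' x := by
  have I := integrableOn_genLaguerreFun_mul hβ α α
  have hexpand : (fun x => (genLaguerreFun α β a x + s * genLaguerreFun α β a' x) *
      (genLaguerreFun α β b x + t * genLaguerreFun α β b' x)) = fun x =>
        genLaguerreFun α β a x * genLaguerreFun α β b x +
        t * (genLaguerreFun α β a x * genLaguerreFun α β b' x) +
        s * (genLaguerreFun α β a' x * genLaguerreFun α β b x) +
        s * t * (genLaguerreFun α β a' x * genLaguerreFun α β b' x) := by
    funext x
    ring
  rw [hexpand]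
  have h1 := (I a b).fun_add ((I a b').const_mul t)
  have h2 := h1.fun_add ((I a' b).const_mul s)
  refine ⟨h2.fun_add ((I a' b').const_mul (s * t)), ?_⟩
  rw [integral_add h2 ((I a' b').const_mul _), integral_add h1 ((I a' b).const_mul _),
    integral_add (I a b) ((I a b').const_mul _), integral_const_mul, integral_const_mul,
    integral_const_mul]

theorem deriv_mul_deriv_genLaguerreFun_neg_one (β : ℝ) (k j : ℤ) (x : ℝ) :
    deriv (genLaguerreFun (-1) β k) x * deriv (genLaguerreFun (-1) β j) x =
      β ^ 2 / 4 * ((genLaguerreFun 0 β k x + 1 * genLaguerreFun 0 β (k - 1) x) *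
        (genLaguerreFun 0 β j x + 1 * genLaguerreFun 0 β (j - 1) x)) := by
  rw [(hasDerivAt_genLaguerreFun_neg_one β k x).deriv,
    (hasDerivAt_genLaguerreFun_neg_one β j x).deriv]
  ring

theorem integrableOn_deriv_mul_deriv_genLaguerreFun_neg_one {β : ℝ} (hβ : 0 < β) (k j : ℤ) :
    IntegrableOn
      (fun x => deriv (genLaguerreFun (-1) β k) x * deriv (genLaguerreFun (-1) β j) x) (Ioi 0) := by
  simp only [deriv_mul_deriv_genLaguerreFun_neg_one]
  exact (integral_genLaguerreFun_add_mul_add hβ 0 1 1 k (k - 1) j (j - 1)).1.const_mul _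

theorem robinForm_finset_sum (γ μ : ℝ) {ι : Type*} (s : Finset ι) (c : ι → ℝ) (u : ℝ → ℝ)
    (v : ι → ℝ → ℝ) (hv : ∀ i ∈ s, Differentiable ℝ (v i))
    (hderiv : ∀ i ∈ s, IntegrableOn (fun x => deriv u x * deriv (v i) x) (Ioi 0))
    (hmass : ∀ i ∈ s, IntegrableOn (fun x => u x * v i x) (Ioi 0)) :
    robinForm γ μ u (fun x => ∑ i ∈ s, c i * v i x) = ∑ i ∈ s, c i * robinForm γ μ u (v i) := by
  have hd : deriv (fun x => ∑ i ∈ s, c i * v i x) = fun x => ∑ i ∈ s, c i * deriv (v i) x := by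
    funext x
    rw [deriv_fun_sum fun i hi => ((hv i hi) x).const_mul (c i)]
    exact sum_congr rfl fun i hi => deriv_const_mul _ ((hv i hi) x)
  have hI : ∀ w : ℝ → ℝ, ∀ f : ι → ℝ → ℝ, (∀ i ∈ s, IntegrableOn (fun x => w x * f i x) (Ioi 0)) →
      ∫ x in Ioi 0, w x * ∑ i ∈ s, c i * f i x = ∑ i ∈ s, c i * ∫ x in Ioi 0, w x * f i x := by
    intro w f hf
    simp only [mul_sum, mul_left_comm (w _)]
    rw [integral_finsetSum _ fun i hi => (hf i hi).const_mul (c i)]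
    simp only [integral_const_mul]
  simp only [robinForm, hd]
  rw [hI _ _ hderiv, hI _ _ hmass, mul_sum, mul_sum, ← sum_add_distrib, ← sum_add_distrib]
  exact sum_congr rfl fun i _ => by ring

theorem robinForm_genLaguerreFun_neg_one {β : ℝ} (hβ : 0 < β) (γ μ : ℝ) {j k : ℤ} (hj : 0 ≤ j)
    (hjk : j < k) :
    robinForm γ μ (genLaguerreFun (-1) β k) (genLaguerreFun (-1) β j) =
      (β / 4 - γ / β) * if j + 1 = k then 1 else 0 := by
  have horth : ∀ s t : ℝ, ∫ x in Ioi 0,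
      (genLaguerreFun 0 β k x + s * genLaguerreFun 0 β (k - 1) x) *
        (genLaguerreFun 0 β j x + t * genLaguerreFun 0 β (j - 1) x) =
          s * β⁻¹ * if j + 1 = k then 1 else 0 := by
    intro s t
    rw [(integral_genLaguerreFun_add_mul_add hβ 0 s t k (k - 1) j (j - 1)).2]
    simp only [integral_genLaguerreFun_zero_mul hβ (show 0 ≤ k by omega),
      integral_genLaguerreFun_zero_mul hβ (show 0 ≤ k - 1 by omega), if_neg (show k ≠ j by omega),
      if_neg (show k ≠ j - 1 by omega), if_neg (show k - 1 ≠ j - 1 by omega)]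
    by_cases h : j + 1 = k
    · simp [h, show k - 1 = j by omega]
    · simp [h, show k - 1 ≠ j by omega]
  have hmass : ∀ x, genLaguerreFun (-1) β k x * genLaguerreFun (-1) β j x =
      (genLaguerreFun 0 β k x + -1 * genLaguerreFun 0 β (k - 1) x) *
        (genLaguerreFun 0 β j x + -1 * genLaguerreFun 0 β (j - 1) x) := fun x => by
    rw [genLaguerreFun_neg_one_eq_sub, genLaguerreFun_neg_one_eq_sub]
    ring
  rw [robinForm, genLaguerreFun_neg_one_apply_zero β (by omega),
    funext (deriv_mul_deriv_genLaguerreFun_neg_one β k j), funext hmass, integral_const_mul,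
    horth, horth]
  field_simp
  ring

theorem Rfun_eq_sum (β γ μ : ℝ) (m : ℕ) :
    ∃ e : ℕ → ℝ, e m = 1 ∧
      Rfun β γ μ m = fun x => ∑ j ∈ range (m + 1), e j * genLaguerreFun (-1) β j x := by
  induction m with
  | zero => exact ⟨fun _ => 1, rfl, by ext x; simp [Rfun]⟩
  | succ m ih =>
    obtain ⟨e, -, he⟩ := ih
    set d := (β / 4 - γ / β) / rhoR β γ μ m
    refine ⟨Function.update (fun j => -d * e j) (m + 1) 1, by simp, ?_⟩
    ext x
    rw [sum_range_succ, Function.update_self, Rfun, he]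
    push_cast
    simp only [mul_sum]
    rw [sub_eq_add_neg, add_comm, one_mul, ← sum_neg_distrib]
    congr 1
    refine sum_congr rfl fun j hj => ?_
    rw [Function.update_of_ne (by rw [Finset.mem_range] at hj; omega)]
    ring

theorem robinForm_laguerre_Rfun_general (β γ μ : ℝ) (hβ : 0 < β)
    (k m : ℕ) (hmk : m < k) :
    robinForm γ μ (genLaguerreFun (-1) β k) (Rfun β γ μ m)
      = (β / 4 - γ / β) * (if m + 1 = k then 1 else 0) := by
  obtain ⟨e, hem, hR⟩ := Rfun_eq_sum β γ μ m
  rw [hR, robinForm_finset_sum γ μ (range (m + 1)) e _ (fun j : ℕ => genLaguerreFun (-1) β j)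
    (fun j _ x => (hasDerivAt_genLaguerreFun_neg_one β j x).differentiableAt)
    (fun j _ => integrableOn_deriv_mul_deriv_genLaguerreFun_neg_one hβ k j)
    (fun j _ => integrableOn_genLaguerreFun_mul hβ (-1) (-1) k j), sum_eq_single m]
  · rw [hem, one_mul, robinForm_genLaguerreFun_neg_one hβ γ μ (by positivity) (by exact_mod_cast hmk)]
    norm_cast
  · intro j hj hjm
    rw [Finset.mem_range] at hj
    rw [robinForm_genLaguerreFun_neg_one hβ γ μ (by positivity) (by omega), if_neg (by omega),
      mul_zero, mul_zero]
  · simp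

theorem robinForm_laguerre_Rfun (β γ μ : ℝ) (hβ : 0 < β) (hγ : 0 ≤ γ) (hμ : 0 ≤ μ)
    (k m : ℕ) (hmk : m < k) :
    robinForm γ μ (genLaguerreFun (-1) β k) (Rfun β γ μ m)
      = (β / 4 - γ / β) * (if m + 1 = k then 1 else 0) :=
  robinForm_laguerre_Rfun_general β γ μ hβ k m hmk
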